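/- arXiv:1802.05558 — 9 statements merged into one kernel-verified Lean document; each statement's English description precedes it below -/
import Mathlib

section
/- Let a, b, c be nonnegative real numbers such that the generalized Choi map Φ_{[a,b,c]} is positive (i.e., 0 ≤ a < 2, a + b + c ≥ 2, and bc ≥ (1−a)² whenever a ≤ 1). Then Φ_{[a,b,c]} is indecomposable if and only if 4bc < (2−a)². -/
open Matrix
open scoped ComplexOrder

noncomputable section

/-- A map between complex matrix algebras is positive if it maps positive semidefinite
matrices to positive semidefinite matrices. -/
def IsPosMap {m n : ℕ} (Φ : Matrix (Fin m) (Fin m) ℂ → Matrix (Fin n) (Fin n) ℂ) : Prop :=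
  ∀ X, X.PosSemidef → (Φ X).PosSemidef

/-- Blockwise application of a map `Φ : M_m → M_n` to a matrix in `M_k(M_m)`:
`Φ_k (X_{ij}) = (Φ(X_{ij}))`. -/
def blockApply {m n : ℕ} (k : ℕ)
    (Φ : Matrix (Fin m) (Fin m) ℂ → Matrix (Fin n) (Fin n) ℂ)
    (X : Matrix (Fin k × Fin m) (Fin k × Fin m) ℂ) :
    Matrix (Fin k × Fin n) (Fin k × Fin n) ℂ :=
  Matrix.of fun p q => Φ (Matrix.of fun i j => X (p.1, i) (q.1, j)) p.2 q.2

/-- `Φ` is completely positive if it is `k`-positive for every `k`, i.e. the blockwise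
application of `Φ` to `M_k(M_m)` is a positive map for every `k`. -/
def IsCompletelyPositive {m n : ℕ}
    (Φ : Matrix (Fin m) (Fin m) ℂ → Matrix (Fin n) (Fin n) ℂ) : Prop :=
  ∀ k : ℕ, ∀ X : Matrix (Fin k × Fin m) (Fin k × Fin m) ℂ,
    X.PosSemidef → (blockApply k Φ X).PosSemidef

/-- `Φ` is decomposable if it is the sum of a completely positive linear map and a
completely copositive linear map. -/
def IsDecomposable {m n : ℕ}
    (Φ : Matrix (Fin m) (Fin m) ℂ → Matrix (Fin n) (Fin n) ℂ) : Prop :=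
  ∃ Φ₁ Φ₂ : Matrix (Fin m) (Fin m) ℂ → Matrix (Fin n) (Fin n) ℂ,
    IsLinearMap ℂ Φ₁ ∧ IsLinearMap ℂ Φ₂ ∧
    IsCompletelyPositive Φ₁ ∧ IsCompletelyPositive (fun X => (Φ₂ X)ᵀ) ∧
    ∀ X, Φ X = Φ₁ X + Φ₂ X

/-- The Choi matrix of `Φ`: `C_Φ = (Φ(E_{ij}))_{i,j}` as an element of `M_m ⊗ M_n`. -/
def choiMatrix {m n : ℕ} (Φ : Matrix (Fin m) (Fin m) ℂ → Matrix (Fin n) (Fin n) ℂ) :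
    Matrix (Fin m × Fin n) (Fin m × Fin n) ℂ :=
  Matrix.of fun p q => Φ (Matrix.single p.1 q.1 1) p.2 q.2

/-- The simple tensor `ξ ⊗ η` of two vectors. -/
def tensorVec {m n : ℕ} (ξ : Fin m → ℂ) (η : Fin n → ℂ) : Fin m × Fin n → ℂ :=
  fun p => ξ p.1 * η p.2

/-- The partial transposition `(id ⊗ transpose)` on `M_m ⊗ M_n`. -/
def partialTranspose {m n : ℕ} (ρ : Matrix (Fin m × Fin n) (Fin m × Fin n) ℂ) :
    Matrix (Fin m × Fin n) (Fin m × Fin n) ℂ :=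
  Matrix.of fun p q => ρ (p.1, q.2) (q.1, p.2)

/-- The Choi-like map `Φ_A` associated to a matrix `A` of coefficients: the `i`-th diagonal
entry of `Φ_A(X)` is `∑ k, A i k * x_{kk}` and the off-diagonal entries are `-x_{ij}`. -/
def PhiMap {n : ℕ} (A : Matrix (Fin n) (Fin n) ℝ) (X : Matrix (Fin n) (Fin n) ℂ) :
    Matrix (Fin n) (Fin n) ℂ :=
  Matrix.of fun i j => if i = j then ∑ k, (A i k : ℂ) * X k k else -X i j

/-- The generalized Choi map `Φ_{[a,b,c]}` of Cho, Kye and Lee. -/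
def genChoiMap (a b c : ℝ) : Matrix (Fin 3) (Fin 3) ℂ → Matrix (Fin 3) (Fin 3) ℂ :=
  PhiMap !![a, b, c; c, a, b; b, c, a]

/-- Kye's map `Φ_{[a; c₁, c₂, c₃]}`. -/
def kyeMap (a c₁ c₂ c₃ : ℝ) : Matrix (Fin 3) (Fin 3) ℂ → Matrix (Fin 3) (Fin 3) ℂ :=
  PhiMap !![a, 0, c₁; c₂, a, 0; 0, c₃, a]

/-- The diagonal map `Δ_A(X) = diag(∑_j (a_{ij} + δ_{ij}) x_{jj})_i`. -/
def DeltaMap {n : ℕ} (A : Matrix (Fin n) (Fin n) ℝ) (X : Matrix (Fin n) (Fin n) ℂ) :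
    Matrix (Fin n) (Fin n) ℂ :=
  Matrix.diagonal (fun i => ∑ j, ((A i j : ℂ) + if i = j then 1 else 0) * X j j)

/-- The map `Φ_A(X) = Δ_A(X) - X`. -/
def PhiDelta {n : ℕ} (A : Matrix (Fin n) (Fin n) ℝ) (X : Matrix (Fin n) (Fin n) ℂ) :
    Matrix (Fin n) (Fin n) ℂ :=
  DeltaMap A X - X

/-!
A decomposable map `Φ = Φ₁ + Φ₂` pairs nonnegatively, through `tr (C_Φ ρ)`, with every `ρ ≥ 0`
whose partial transpose is also `≥ 0`: the Choi matrix of `Φ₁` is positive, and the partial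
transpose of the Choi matrix of `Φ₂` is the Choi matrix of `Φ₂ᵀ`, which is positive as well.
The Choi matrix of `X ↦ X + diag (D · diag X)`, with `D` circulant with off-diagonal entries
`x, y`, is such a `ρ` once `x y ≥ 1`, and pairs with `Φ_{[a,b,c]}` to `3 (a - 2 + b x + c y)`;
by AM-GM this can be made negative exactly when `4 b c < (2 - a)²`.

Conversely, if `(2 - a)² ≤ 4 b c`, then `Φ_{[a,b,c]}` is `a/2` times the completely positive map
`X ↦ 2 diag X - (X - diag X)` plus a map whose transpose is the sum of three completely positive
maps with a `2 × 2` Choi block `[[c, -s], [-s, b]]`, `s = (2 - a) / 2`.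
-/

open scoped Kronecker

section CompletelyPositive

variable {m n : ℕ}

theorem isCompletelyPositive_mul_mul_conjTranspose (V : Matrix (Fin n) (Fin m) ℂ) :
    IsCompletelyPositive fun X : Matrix (Fin m) (Fin m) ℂ => V * X * Vᴴ := by
  intro k X hX
  convert hX.mul_mul_conjTranspose_same ((1 : Matrix (Fin k) (Fin k) ℂ) ⊗ₖ V) using 1
  ext ⟨i, j⟩ ⟨i', j'⟩
  simp [blockApply, mul_apply, Fintype.sum_prod_type, one_apply, Finset.sum_mul,
    apply_ite (starRingEnd ℂ)]

theorem IsCompletelyPositive.add {Φ Ψ : Matrix (Fin m) (Fin m) ℂ → Matrix (Fin n) (Fin n) ℂ}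
    (hΦ : IsCompletelyPositive Φ) (hΨ : IsCompletelyPositive Ψ) :
    IsCompletelyPositive fun X => Φ X + Ψ X :=
  fun k X hX => (hΦ k X hX).add (hΨ k X hX)

theorem IsCompletelyPositive.smul {Φ : Matrix (Fin m) (Fin m) ℂ → Matrix (Fin n) (Fin n) ℂ}
    (hΦ : IsCompletelyPositive Φ) {r : ℝ} (hr : 0 ≤ r) :
    IsCompletelyPositive fun X => (r : ℂ) • Φ X :=
  fun k X hX => (hΦ k X hX).smul (Complex.zero_le_real.mpr hr)

theorem IsCompletelyPositive.sum {ι : Type*} (s : Finset ι)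
    {Φ : ι → Matrix (Fin m) (Fin m) ℂ → Matrix (Fin n) (Fin n) ℂ}
    (hΦ : ∀ i ∈ s, IsCompletelyPositive (Φ i)) :
    IsCompletelyPositive fun X => ∑ i ∈ s, Φ i X := by
  intro k X hX
  convert posSemidef_sum s fun i hi => hΦ i hi k X hX
  ext
  simp [blockApply, Matrix.sum_apply]

end CompletelyPositive

theorem Matrix.PosSemidef.trace_mul_nonneg {ι : Type*} [Fintype ι] {A B : Matrix ι ι ℂ}
    (hA : A.PosSemidef) (hB : B.PosSemidef) : 0 ≤ (A * B).trace := by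
  classical
  obtain ⟨C, rfl⟩ : ∃ C : Matrix ι ι ℂ, B = Cᴴ * C := by
    open MatrixOrder in exact CStarAlgebra.nonneg_iff_eq_star_mul_self.mp hB.nonneg
  rw [← Matrix.mul_assoc, trace_mul_cycle]
  exact (hA.mul_mul_conjTranspose_same C).trace_nonneg

section Choi

variable {m n : ℕ}

theorem trace_partialTranspose_mul_partialTranspose
    (A B : Matrix (Fin m × Fin n) (Fin m × Fin n) ℂ) :
    (partialTranspose A * partialTranspose B).trace = (A * B).trace := by
  simp only [trace, diag, mul_apply, partialTranspose, of_apply]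
  rw [← Finset.sum_product', ← Finset.sum_product']
  exact Finset.sum_nbij' (fun x => ((x.1.1, x.2.2), (x.2.1, x.1.2)))
    (fun x => ((x.1.1, x.2.2), (x.2.1, x.1.2))) (by simp) (by simp) (by simp) (by simp)
    (by simp)

theorem choiMatrix_transpose (Φ : Matrix (Fin m) (Fin m) ℂ → Matrix (Fin n) (Fin n) ℂ) :
    choiMatrix (fun X => (Φ X)ᵀ) = partialTranspose (choiMatrix Φ) := by
  ext
  simp [choiMatrix, partialTranspose]

/-- The Choi matrix is the image under `Φ_m` of the rank-one matrix `∑ᵢⱼ Eᵢⱼ ⊗ Eᵢⱼ`. -/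
theorem IsCompletelyPositive.posSemidef_choiMatrix
    {Φ : Matrix (Fin m) (Fin m) ℂ → Matrix (Fin n) (Fin n) ℂ} (hΦ : IsCompletelyPositive Φ) :
    (choiMatrix Φ).PosSemidef := by
  let v : Fin m × Fin m → ℂ := fun p => if p.1 = p.2 then 1 else 0
  convert hΦ m (vecMulVec v (star v)) (posSemidef_vecMulVec_self_star v) using 1
  ext p q
  simp only [choiMatrix, blockApply, of_apply]
  congr 2
  ext i j
  simp [v, vecMulVec, single]
  grind

theorem IsDecomposable.trace_choiMatrix_mul_nonneg
    {Φ : Matrix (Fin m) (Fin m) ℂ → Matrix (Fin n) (Fin n) ℂ} (hΦ : IsDecomposable Φ)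
    {ρ : Matrix (Fin m × Fin n) (Fin m × Fin n) ℂ}
    (hρ : ρ.PosSemidef) (hρΓ : (partialTranspose ρ).PosSemidef) :
    0 ≤ (choiMatrix Φ * ρ).trace := by
  obtain ⟨Φ₁, Φ₂, -, -, hΦ₁, hΦ₂, hsum⟩ := hΦ
  have hchoi : choiMatrix Φ = choiMatrix Φ₁ + choiMatrix Φ₂ := by
    ext
    simp [choiMatrix, hsum]
  have h₂ : (choiMatrix Φ₂ * ρ).trace =
      (choiMatrix (fun X => (Φ₂ X)ᵀ) * partialTranspose ρ).trace := by
    rw [choiMatrix_transpose, trace_partialTranspose_mul_partialTranspose]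
  rw [hchoi, add_mul, trace_add, h₂]
  exact add_nonneg (hΦ₁.posSemidef_choiMatrix.trace_mul_nonneg hρ)
    (hΦ₂.posSemidef_choiMatrix.trace_mul_nonneg hρΓ)

end Choi

section ChoiTypeMaps

variable {n : ℕ}

/-- Its Choi matrix is the block `[[q, μ], [μ, p]]` on `eᵢ ⊗ eⱼ, eⱼ ⊗ eᵢ` (when `i ≠ j`). -/
def swapPairMap (i j : Fin n) (p q μ : ℝ) (X : Matrix (Fin n) (Fin n) ℂ) :
    Matrix (Fin n) (Fin n) ℂ :=
  single i i (p * X j j) + single j j (q * X i i) + single i j (μ * X j i) +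
    single j i (μ * X i j)

theorem isLinearMap_swapPairMap (i j : Fin n) (p q μ : ℝ) :
    IsLinearMap ℂ (swapPairMap i j p q μ) where
  map_add X Y := by
    simp only [swapPairMap, Matrix.add_apply, mul_add, single_add]
    abel
  map_smul z X := by
    simp only [swapPairMap, Matrix.smul_apply, smul_add, smul_single, smul_eq_mul, mul_left_comm]

theorem isCompletelyPositive_swapPairMap (i j : Fin n) {p q μ : ℝ} (hp : 0 < p)
    (hμ : μ ^ 2 ≤ p * q) : IsCompletelyPositive (swapPairMap i j p q μ) := by
  let V : Matrix (Fin n) (Fin n) ℂ := single i j (p : ℂ) + single j i (μ : ℂ)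
  have hq : 0 ≤ q - μ ^ 2 / p := by rw [sub_nonneg, div_le_iff₀ hp]; linarith
  convert ((isCompletelyPositive_mul_mul_conjTranspose V).smul (inv_nonneg.2 hp.le)).add
    ((isCompletelyPositive_mul_mul_conjTranspose (single j i (1 : ℂ))).smul hq) using 2 with X
  have hp' : (p : ℂ) ≠ 0 := Complex.ofReal_ne_zero.2 hp.ne'
  simp only [swapPairMap, V, add_mul, mul_add, conjTranspose_add, conjTranspose_single,
    single_mul_mul_single, smul_add, smul_single, Complex.star_def, Complex.conj_ofReal,
    smul_eq_mul, map_one, mul_one, one_mul, Complex.ofReal_inv, Complex.ofReal_sub,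
    Complex.ofReal_div, Complex.ofReal_pow]
  rw [show (p : ℂ)⁻¹ * (p * X j j * p) = p * X j j by field_simp,
    show (p : ℂ)⁻¹ * (μ * X i j * p) = μ * X i j by field_simp,
    show (p : ℂ)⁻¹ * (p * X j i * μ) = μ * X j i by field_simp,
    show (q : ℂ) * X i i = (p : ℂ)⁻¹ * (μ * X i i * μ) + (q - μ ^ 2 / p) * X i i by
      field_simp; ring, single_add]
  abel

theorem isLinearMap_phiMap (A : Matrix (Fin n) (Fin n) ℝ) : IsLinearMap ℂ (PhiMap A) where
  map_add X Y := by
    ext i j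
    by_cases h : i = j <;> simp [PhiMap, h, mul_add, Finset.sum_add_distrib, add_comm]
  map_smul z X := by
    ext i j
    by_cases h : i = j <;> simp [PhiMap, h, Finset.mul_sum, mul_left_comm]

theorem isCompletelyPositive_phiMap_smul_one :
    IsCompletelyPositive (PhiMap (((n : ℝ) - 1) • 1 : Matrix (Fin n) (Fin n) ℝ)) := by
  let D : Fin n → Fin n → Matrix (Fin n) (Fin n) ℂ := fun i j =>
    diagonal (Pi.single i 1 - Pi.single j 1)
  convert IsCompletelyPositive.sum Finset.univ fun i _ => IsCompletelyPositive.sum Finset.univ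
    fun j _ => (isCompletelyPositive_mul_mul_conjTranspose (D i j)).smul (r := 1 / 2)
      (by norm_num) using 2 with X
  ext r s
  simp only [PhiMap, D, of_apply, Matrix.sum_apply, Matrix.smul_apply, diagonal_conjTranspose,
    diagonal_mul, mul_diagonal]
  split_ifs with hrs
  · subst hrs
    simp [Pi.single_apply, one_apply, sub_mul, mul_sub, ite_mul, mul_ite, Finset.sum_sub_distrib,
      apply_ite (fun x : ℝ => (x : ℂ))]
    ring
  · simp [Pi.single_apply, sub_mul, mul_sub, ite_mul, mul_ite, Finset.sum_sub_distrib, hrs]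
    ring

theorem isCompletelyPositive_diagonal_sum_mul_diag {D : Matrix (Fin n) (Fin n) ℝ}
    (hD : ∀ i k, 0 ≤ D i k) :
    IsCompletelyPositive fun X => diagonal fun i => ∑ k, (D i k : ℂ) * X k k := by
  convert IsCompletelyPositive.sum Finset.univ fun i _ => IsCompletelyPositive.sum Finset.univ
    fun k _ => (isCompletelyPositive_mul_mul_conjTranspose (single i k (1 : ℂ))).smul (hD i k)
    using 2 with X
  ext r s
  by_cases h : r = s
  · subst h
    simp [Matrix.sum_apply, single_apply]
  · simp [diagonal_apply_ne _ h, Matrix.sum_apply, single_apply]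
    exact (Finset.sum_eq_zero fun t _ => if_neg fun ht => h (ht.1.symm.trans ht.2)).symm

end ChoiTypeMaps

theorem isDecomposable_genChoiMap {a b c : ℝ} (ha : 0 ≤ a) (hb : 0 < b)
    (h : (2 - a) ^ 2 ≤ 4 * b * c) : IsDecomposable (genChoiMap a b c) := by
  let s := (2 - a) / 2
  let Φ₁ := fun X =>
    ((a / 2 : ℝ) : ℂ) • PhiMap ((((3 : ℕ) : ℝ) - 1) • 1 : Matrix (Fin 3) (Fin 3) ℝ) X
  let Φ₂ := fun X => (∑ i : Fin 3, swapPairMap i (i + 1) b c (-s) X)ᵀ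
  refine ⟨Φ₁, Φ₂, ?_, ?_, isCompletelyPositive_phiMap_smul_one.smul (by linarith), ?_, ?_⟩
  · exact (((a / 2 : ℝ) : ℂ) • IsLinearMap.mk' _ (isLinearMap_phiMap _)).isLinear
  · exact ((transposeLinearEquiv (Fin 3) (Fin 3) ℂ ℂ).toLinearMap ∘ₗ
      ∑ i : Fin 3, IsLinearMap.mk' _ (isLinearMap_swapPairMap i (i + 1) b c (-s))).isLinear
  · simpa only [Φ₂, transpose_transpose] using IsCompletelyPositive.sum Finset.univ fun i _ =>
      isCompletelyPositive_swapPairMap i (i + 1) hb (by simp only [s]; nlinarith)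
  · intro X
    ext i j
    fin_cases i <;> fin_cases j <;>
      simp [Φ₁, Φ₂, s, genChoiMap, PhiMap, swapPairMap, Fin.sum_univ_three] <;> ring

def pptState (x y : ℝ) : Matrix (Fin 3 × Fin 3) (Fin 3 × Fin 3) ℂ :=
  choiMatrix fun X => X + diagonal fun i =>
    ∑ k, ((!![0, x, y; y, 0, x; x, y, 0] : Matrix (Fin 3) (Fin 3) ℝ) i k : ℂ) * X k k

theorem posSemidef_pptState {x y : ℝ} (hx : 0 ≤ x) (hy : 0 ≤ y) :
    (pptState x y).PosSemidef := by
  have hD := isCompletelyPositive_diagonal_sum_mul_diag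
    (D := !![0, x, y; y, 0, x; x, y, 0]) fun i k => by fin_cases i <;> fin_cases k <;> simp [hx, hy]
  simpa [pptState] using ((isCompletelyPositive_mul_mul_conjTranspose 1).add hD).posSemidef_choiMatrix

theorem posSemidef_partialTranspose_pptState {x y : ℝ} (hx : 0 < x) (hxy : 1 ≤ x * y) :
    (partialTranspose (pptState x y)).PosSemidef := by
  rw [pptState, ← choiMatrix_transpose]
  refine IsCompletelyPositive.posSemidef_choiMatrix ?_
  convert IsCompletelyPositive.sum Finset.univ fun (i : Fin 3) _ =>
    (isCompletelyPositive_mul_mul_conjTranspose (single i i (1 : ℂ))).add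
      (isCompletelyPositive_swapPairMap i (i + 1) hx (μ := 1) (by linarith)) using 2 with X
  ext r s
  fin_cases r <;> fin_cases s <;> simp [swapPairMap, Fin.sum_univ_three] <;> ring

theorem trace_choiMatrix_genChoiMap_mul_pptState (a b c x y : ℝ) :
    (choiMatrix (genChoiMap a b c) * pptState x y).trace = 3 * (a - 2 + b * x + c * y) := by
  simp [trace, mul_apply, choiMatrix, genChoiMap, PhiMap, Fintype.sum_prod_type,
    Fin.sum_univ_three, pptState, single]
  ring

theorem not_isDecomposable_genChoiMap_of_lt {a b c x y : ℝ} (hx : 0 < x) (hxy : 1 ≤ x * y)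
    (h : b * x + c * y < 2 - a) : ¬ IsDecomposable (genChoiMap a b c) := by
  intro hΦ
  have hy : 0 < y := pos_of_mul_pos_right (by linarith) hx.le
  have hpair := hΦ.trace_choiMatrix_mul_nonneg (posSemidef_pptState hx.le hy.le)
    (posSemidef_partialTranspose_pptState hx hxy)
  rw [trace_choiMatrix_genChoiMap_mul_pptState] at hpair
  have : (0 : ℝ) ≤ 3 * (a - 2 + b * x + c * y) := by exact_mod_cast hpair
  linarith

theorem exists_mul_add_mul_lt {b c u : ℝ} (hb : 0 ≤ b) (hc : 0 ≤ c) (hu : 0 < u)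
    (h : 4 * b * c < u ^ 2) : ∃ x y : ℝ, 0 < x ∧ 1 ≤ x * y ∧ b * x + c * y < u := by
  rcases hb.eq_or_lt with rfl | hb
  · refine ⟨(u / (2 * (c + 1)))⁻¹, u / (2 * (c + 1)), by positivity, ?_, ?_⟩
    · rw [inv_mul_cancel₀ (by positivity)]
    · rw [zero_mul, zero_add, mul_div_assoc', div_lt_iff₀ (by positivity)]
      nlinarith
  · refine ⟨u / (2 * b), 2 * b / u, by positivity, le_of_eq (by field_simp), ?_⟩
    rw [mul_div_assoc', mul_div_assoc', div_add_div _ _ (by positivity) hu.ne',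
      div_lt_iff₀ (by positivity)]
    field_simp
    nlinarith

theorem genChoiMap_indecomposable_iff_general (a b c : ℝ) (ha : 0 ≤ a) (hb : 0 ≤ b) (hc : 0 ≤ c)
    (ha2 : a < 2) :
    ¬ IsDecomposable (genChoiMap a b c) ↔ 4 * b * c < (2 - a) ^ 2 := by
  constructor
  · intro hΦ
    by_contra! h
    have hb' : 0 < b := hb.lt_of_ne (by rintro rfl; nlinarith)
    exact hΦ (isDecomposable_genChoiMap ha hb' h)
  · intro h
    obtain ⟨x, y, hx, hxy, hlt⟩ := exists_mul_add_mul_lt hb hc (by linarith) h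
    exact not_isDecomposable_genChoiMap_of_lt hx hxy hlt

/-- If `Φ_{[a,b,c]}` is positive (i.e. `0 ≤ a < 2`, `a + b + c ≥ 2`, and
`bc ≥ (1-a)²` whenever `a ≤ 1`), then it is indecomposable iff `4bc < (2-a)²`. -/
theorem genChoiMap_indecomposable_iff (a b c : ℝ) (ha : 0 ≤ a) (hb : 0 ≤ b) (hc : 0 ≤ c)
    (ha2 : a < 2) (habc : 2 ≤ a + b + c) (hbc : a ≤ 1 → (1 - a) ^ 2 ≤ b * c) :
    ¬ IsDecomposable (genChoiMap a b c) ↔ 4 * b * c < (2 - a) ^ 2 :=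
  genChoiMap_indecomposable_iff_general a b c ha hb hc ha2
end
end

section
/- A linear map Φ : M_m(ℂ) → M_n(ℂ) is positive if and only if its Choi matrix C_Φ is block positive, i.e., ⟨ξ⊗η, C_Φ (ξ⊗η)⟩ ≥ 0 for all vectors ξ ∈ ℂ^m and η ∈ ℂ^n. -/
/-!
A positive semidefinite matrix is a sum of rank-one matrices `ξ̄ ξᵀ = (ξ̄ᵢ ξⱼ)ᵢⱼ`, so a linear map
is positive as soon as it maps these to positive semidefinite matrices. Expanding
`Φ(ξ̄ ξᵀ) = ∑ ξ̄ᵢ ξⱼ Φ(E_ij)` gives `⟨ξ ⊗ η, C_Φ (ξ ⊗ η)⟩ = ⟨η, Φ(ξ̄ ξᵀ) η⟩`, and over `ℂ` a matrix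
with nonnegative quadratic form is automatically Hermitian, hence positive semidefinite.
-/

open Matrix
open scoped ComplexOrder

noncomputable section

theorem Matrix.posSemidef_iff_forall_dotProduct_mulVec_nonneg {n : Type*} [Fintype n]
    {A : Matrix n n ℂ} : A.PosSemidef ↔ ∀ x : n → ℂ, 0 ≤ star x ⬝ᵥ A *ᵥ x := by
  classical
  refine ⟨PosSemidef.dotProduct_mulVec_nonneg, fun h => .of_dotProduct_mulVec_nonneg ?_ h⟩
  rw [← isSymmetric_toEuclideanLin_iff, LinearMap.isSymmetric_iff_inner_map_self_real]
  intro v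
  have hreal := Complex.conj_eq_iff_im.mpr (Complex.nonneg_iff.mp (h v.ofLp)).2.symm
  have hinner : v.ofLp ⬝ᵥ star (A *ᵥ v.ofLp) = star (star v.ofLp ⬝ᵥ A *ᵥ v.ofLp) := by
    rw [dotProduct_star, dotProduct_comm]
  simp [EuclideanSpace.inner_eq_star_dotProduct, hinner, hreal]

theorem LinearMap.map_eq_sum_smul_single {R m n β : Type*} [Semiring R] [Fintype m] [Fintype n]
    [DecidableEq m] [DecidableEq n] [AddCommMonoid β] [Module R β] (Φ : Matrix m n R →ₗ[R] β)
    (X : Matrix m n R) : Φ X = ∑ i, ∑ j, X i j • Φ (Matrix.single i j 1) := by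
  conv_lhs => rw [matrix_eq_sum_single X]
  simp [← map_smul]

theorem isPosMap_iff_forall_posSemidef_map_vecMulVec {m n : ℕ}
    (Φ : Matrix (Fin m) (Fin m) ℂ →ₗ[ℂ] Matrix (Fin n) (Fin n) ℂ) :
    IsPosMap Φ ↔ ∀ ξ : Fin m → ℂ, (Φ (vecMulVec (star ξ) ξ)).PosSemidef := by
  refine ⟨fun hΦ ξ => hΦ _ (posSemidef_vecMulVec_star_self ξ), fun h X hX => ?_⟩
  obtain ⟨k, v, rfl⟩ := posSemidef_iff_eq_sum_vecMulVec.mp hX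
  rw [map_sum]
  exact posSemidef_sum _ fun i _ => by simpa using h (star (v i))

theorem star_tensorVec_dotProduct_choiMatrix_mulVec {m n : ℕ}
    (Φ : Matrix (Fin m) (Fin m) ℂ →ₗ[ℂ] Matrix (Fin n) (Fin n) ℂ) (ξ : Fin m → ℂ)
    (η : Fin n → ℂ) :
    star (tensorVec ξ η) ⬝ᵥ choiMatrix Φ *ᵥ tensorVec ξ η
      = star η ⬝ᵥ Φ (vecMulVec (star ξ) ξ) *ᵥ η := by
  rw [Φ.map_eq_sum_smul_single]
  simp only [sum_mulVec, smul_mulVec, dotProduct_sum, dotProduct_smul, smul_eq_mul]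
  simp only [dotProduct, mulVec, tensorVec, choiMatrix, of_apply, Fintype.sum_prod_type,
    vecMulVec_apply, Finset.mul_sum, Pi.star_apply, star_mul']
  refine Finset.sum_congr rfl fun i _ => ?_
  rw [Finset.sum_comm]
  exact Finset.sum_congr rfl fun j _ => Finset.sum_congr rfl fun a _ =>
    Finset.sum_congr rfl fun b _ => by ring

/-- A linear map `Φ : M_m → M_n` is positive iff its Choi matrix is
block positive: `⟨ξ⊗η, C_Φ (ξ⊗η)⟩ ≥ 0` for all `ξ ∈ ℂ^m`, `η ∈ ℂ^n`. -/
theorem isPosMap_iff_blockPositive (m n : ℕ)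
    (Φ : Matrix (Fin m) (Fin m) ℂ → Matrix (Fin n) (Fin n) ℂ) (hlin : IsLinearMap ℂ Φ) :
    IsPosMap Φ ↔ ∀ (ξ : Fin m → ℂ) (η : Fin n → ℂ),
      0 ≤ star (tensorVec ξ η) ⬝ᵥ (choiMatrix Φ).mulVec (tensorVec ξ η) := by
  let Ψ := IsLinearMap.mk' Φ hlin
  change IsPosMap Ψ ↔ ∀ ξ η, 0 ≤ star (tensorVec ξ η) ⬝ᵥ choiMatrix Ψ *ᵥ tensorVec ξ η
  simp only [isPosMap_iff_forall_posSemidef_map_vecMulVec,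
    posSemidef_iff_forall_dotProduct_mulVec_nonneg, star_tensorVec_dotProduct_choiMatrix_mulVec]
end
end

section
/- Let A be a 3×3 real matrix with rows (a_1,b_1,c_1), (c_2,a_2,b_2), (b_3,c_3,a_3) and all entries nonnegative. If the map Φ_A is positive, then the generalized Choi map Φ_{[ā,b̄,c̄]} is positive, where ā = (a_1+a_2+a_3)/3, b̄ = (b_1+b_2+b_3)/3, c̄ = (c_1+c_2+c_3)/3. -/
open Matrix
open scoped ComplexOrder

noncomputable section

/-!
Relabelling the coordinates by a permutation `σ` conjugates `Φ_A` into `Φ_{A'}`, where `A'` is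
`A` with rows and columns permuted by `σ`, so `Φ_{A'}` is again positive. Since `Φ_A` is affine in
`A` and its off-diagonal part does not depend on `A`, a convex combination of such maps is
`Φ` of the convex combination of the coefficient matrices. Averaging over the three cyclic
shifts of `A` gives exactly the circulant matrix of `Φ_{[ā,b̄,c̄]}`.
-/

theorem phiMap_submatrix {n : ℕ} (A : Matrix (Fin n) (Fin n) ℝ) (e : Fin n ≃ Fin n)
    (X : Matrix (Fin n) (Fin n) ℂ) :
    PhiMap A (X.submatrix e e) = (PhiMap (A.submatrix e.symm e.symm) X).submatrix e e := by
  ext i j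
  simp only [PhiMap, of_apply, submatrix_apply, e.apply_eq_iff_eq, Equiv.symm_apply_apply]
  split_ifs
  · simpa using e.sum_comp fun k => (A i (e.symm k) : ℂ) * X k k
  · rfl

theorem IsPosMap.phiMap_submatrix {n : ℕ} {A : Matrix (Fin n) (Fin n) ℝ}
    (hA : IsPosMap (PhiMap A)) (e : Fin n ≃ Fin n) :
    IsPosMap (PhiMap (A.submatrix e e)) := fun X hX => by
  simpa [_root_.phiMap_submatrix] using hA _ (hX.submatrix e.symm)

theorem phiMap_sum_smul {n : ℕ} {ι : Type*} [Fintype ι] (w : ι → ℝ) (hw : ∑ i, w i = 1)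
    (A : ι → Matrix (Fin n) (Fin n) ℝ) (X : Matrix (Fin n) (Fin n) ℂ) :
    PhiMap (∑ i, w i • A i) X = ∑ i, w i • PhiMap (A i) X := by
  ext j k
  simp only [PhiMap, of_apply, Matrix.sum_apply, Matrix.smul_apply]
  split_ifs
  · simp [Finset.sum_mul, Finset.mul_sum, Finset.sum_comm (γ := Fin n), mul_assoc]
  · simp [← Finset.sum_mul, ← Complex.ofReal_sum, hw]

theorem isPosMap_phiMap_sum_smul {n : ℕ} {ι : Type*} [Fintype ι] {w : ι → ℝ}
    (hw₀ : ∀ i, 0 ≤ w i) (hw₁ : ∑ i, w i = 1) {A : ι → Matrix (Fin n) (Fin n) ℝ}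
    (hA : ∀ i, IsPosMap (PhiMap (A i))) :
    IsPosMap (PhiMap (∑ i, w i • A i)) := fun X hX => by
  rw [phiMap_sum_smul w hw₁]
  exact posSemidef_sum _ fun i _ => (hA i X hX).smul (hw₀ i)

theorem circulant_average_eq_sum_submatrix_addRight (a₁ a₂ a₃ b₁ b₂ b₃ c₁ c₂ c₃ : ℝ) :
    !![(a₁ + a₂ + a₃) / 3, (b₁ + b₂ + b₃) / 3, (c₁ + c₂ + c₃) / 3;
       (c₁ + c₂ + c₃) / 3, (a₁ + a₂ + a₃) / 3, (b₁ + b₂ + b₃) / 3;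
       (b₁ + b₂ + b₃) / 3, (c₁ + c₂ + c₃) / 3, (a₁ + a₂ + a₃) / 3] =
      ∑ s : Fin 3, (1 / 3 : ℝ) • (!![a₁, b₁, c₁; c₂, a₂, b₂; b₃, c₃, a₃]).submatrix
        (Equiv.addRight s) (Equiv.addRight s) := by
  ext i j
  fin_cases i <;> fin_cases j <;> simp [Fin.sum_univ_three] <;> ring

theorem phiMap_pos_implies_averaged_pos_general (a₁ a₂ a₃ b₁ b₂ b₃ c₁ c₂ c₃ : ℝ)
    (hpos : IsPosMap (PhiMap !![a₁, b₁, c₁; c₂, a₂, b₂; b₃, c₃, a₃])) :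
    IsPosMap (genChoiMap ((a₁ + a₂ + a₃) / 3) ((b₁ + b₂ + b₃) / 3) ((c₁ + c₂ + c₃) / 3)) := by
  rw [genChoiMap, circulant_average_eq_sum_submatrix_addRight]
  exact isPosMap_phiMap_sum_smul (fun _ => by norm_num) (by norm_num)
    fun s => hpos.phiMap_submatrix (Equiv.addRight s)

/-- If `Φ_A` is positive, then the generalized Choi map `Φ_{[ā,b̄,c̄]}`
with the averaged coefficients is positive. -/
theorem phiMap_pos_implies_averaged_pos (a₁ a₂ a₃ b₁ b₂ b₃ c₁ c₂ c₃ : ℝ)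
    (ha₁ : 0 ≤ a₁) (ha₂ : 0 ≤ a₂) (ha₃ : 0 ≤ a₃)
    (hb₁ : 0 ≤ b₁) (hb₂ : 0 ≤ b₂) (hb₃ : 0 ≤ b₃)
    (hc₁ : 0 ≤ c₁) (hc₂ : 0 ≤ c₂) (hc₃ : 0 ≤ c₃)
    (hpos : IsPosMap (PhiMap !![a₁, b₁, c₁; c₂, a₂, b₂; b₃, c₃, a₃])) :
    IsPosMap (genChoiMap ((a₁ + a₂ + a₃) / 3) ((b₁ + b₂ + b₃) / 3) ((c₁ + c₂ + c₃) / 3)) :=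
  phiMap_pos_implies_averaged_pos_general a₁ a₂ a₃ b₁ b₂ b₃ c₁ c₂ c₃ hpos
end
end

section
/- Let A be a 3×3 real matrix with rows (a_1,b_1,c_1), (c_2,a_2,b_2), (b_3,c_3,a_3) and all entries nonnegative. Suppose there exist reals a,b,c ≥ 0 and positive reals p_1,p_2,p_3 such that the generalized Choi map Φ_{[a,b,c]} is positive and the matrix M = A − V^{-1} A_{[a,b,c]} V has all entries nonnegative, where V = diag(p_1,p_2,p_3) and A_{[a,b,c]} is the matrix with rows (a,b,c), (c,a,b), (b,c,a). Then Φ_A is positive. -/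
open Matrix
open scoped ComplexOrder

noncomputable section

/-!
Write `V = diag p`. Conjugating by `diag √p` turns `Φ_B` into `Φ_{V⁻¹BV}`: the
off-diagonal entries `-x_{ij}` are unchanged, while the diagonal weights are rescaled by
`p_k / p_i`. Hence `Φ_{V⁻¹BV}` is positive whenever `Φ_B` is. Finally
`Φ_A = Φ_{V⁻¹BV} + diag((A - V⁻¹BV) diag(X))`, and the second summand is positive
semidefinite as soon as `A - V⁻¹BV` is entrywise nonnegative, since the diagonal of a positive
semidefinite `X` is nonnegative.
-/

lemma posSemidef_diagonal_mul_mul_diagonal {n : ℕ} (d : Fin n → ℝ)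
    {X : Matrix (Fin n) (Fin n) ℂ} (hX : X.PosSemidef) :
    (diagonal (fun i => (d i : ℂ)) * X * diagonal (fun i => (d i : ℂ))).PosSemidef := by
  simpa [diagonal_conjTranspose, Pi.star_def] using
    hX.mul_mul_conjTranspose_same (diagonal fun i => (d i : ℂ))

namespace PhiMap

variable {n : ℕ}

lemma sub_eq_diagonal (A B : Matrix (Fin n) (Fin n) ℝ) (X : Matrix (Fin n) (Fin n) ℂ) :
    PhiMap A X - PhiMap B X =
      diagonal fun i => ∑ k, ((A i k - B i k : ℝ) : ℂ) * X k k := by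
  ext i j
  rcases eq_or_ne i j with rfl | hij
  · simp [PhiMap, sub_mul]
  · simp [PhiMap, hij]

lemma isPosMap_of_le {A B : Matrix (Fin n) (Fin n) ℝ} (hBA : ∀ i j, B i j ≤ A i j)
    (hB : IsPosMap (PhiMap B)) : IsPosMap (PhiMap A) := by
  intro X hX
  have hdiag : (diagonal fun i => ∑ k, ((A i k - B i k : ℝ) : ℂ) * X k k).PosSemidef := by
    refine posSemidef_diagonal_iff.mpr fun i => Finset.sum_nonneg fun k _ => ?_
    exact mul_nonneg (by exact_mod_cast sub_nonneg.mpr (hBA i k)) hX.diag_nonneg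
  rw [← sub_add_cancel (PhiMap A X) (PhiMap B X), sub_eq_diagonal]
  exact hdiag.add (hB X hX)

lemma diagonal_conj (B : Matrix (Fin n) (Fin n) ℝ) {s : Fin n → ℝ} (hs : ∀ i, s i ≠ 0)
    (X : Matrix (Fin n) (Fin n) ℂ) :
    PhiMap (of fun i j => (s i ^ 2)⁻¹ * B i j * s j ^ 2) X =
      diagonal (fun i => ((s i)⁻¹ : ℝ) : Fin n → ℂ) *
        PhiMap B (diagonal (fun i => (s i : ℂ)) * X * diagonal (fun i => (s i : ℂ))) *
          diagonal (fun i => ((s i)⁻¹ : ℝ) : Fin n → ℂ) := by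
  ext i j
  rcases eq_or_ne i j with rfl | hij
  · simp only [PhiMap, of_apply, if_pos, mul_diagonal, diagonal_mul, Finset.mul_sum,
      Finset.sum_mul]
    refine Finset.sum_congr rfl fun k _ => ?_
    push_cast
    grind [Complex.ofReal_eq_zero]
  · simp only [PhiMap, of_apply, if_neg hij, mul_diagonal, diagonal_mul]
    push_cast
    grind [Complex.ofReal_eq_zero]

lemma isPosMap_diagonal_inv_mul_mul_diagonal {B : Matrix (Fin n) (Fin n) ℝ} {p : Fin n → ℝ}
    (hp : ∀ i, 0 < p i) (hB : IsPosMap (PhiMap B)) :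
    IsPosMap (PhiMap ((diagonal p)⁻¹ * B * diagonal p)) := by
  set s : Fin n → ℝ := fun i => √(p i)
  have hs : ∀ i, s i ≠ 0 := fun i => (Real.sqrt_pos.2 (hp i)).ne'
  have hinv : (diagonal p)⁻¹ = diagonal p⁻¹ := inv_eq_left_inv <| by
    rw [diagonal_mul_diagonal, ← diagonal_one]
    exact congrArg diagonal (funext fun i => inv_mul_cancel₀ (hp i).ne')
  have hconj : (diagonal p)⁻¹ * B * diagonal p = of fun i j => (s i ^ 2)⁻¹ * B i j * s j ^ 2 := by
    ext i j
    simp [s, Real.sq_sqrt (hp _).le, hinv]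
  intro X hX
  rw [hconj, diagonal_conj B hs]
  exact posSemidef_diagonal_mul_mul_diagonal _ (hB _ (posSemidef_diagonal_mul_mul_diagonal s hX))

end PhiMap

theorem phiMap_pos_of_exists_dominating_general (a₁ a₂ a₃ b₁ b₂ b₃ c₁ c₂ c₃ : ℝ)
    (a b c : ℝ)
    (p₁ p₂ p₃ : ℝ) (hp₁ : 0 < p₁) (hp₂ : 0 < p₂) (hp₃ : 0 < p₃)
    (hpos : IsPosMap (genChoiMap a b c))
    (hM : ∀ i j, 0 ≤ (!![a₁, b₁, c₁; c₂, a₂, b₂; b₃, c₃, a₃] -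
      (Matrix.diagonal ![p₁, p₂, p₃])⁻¹ * !![a, b, c; c, a, b; b, c, a] *
        Matrix.diagonal ![p₁, p₂, p₃]) i j) :
    IsPosMap (PhiMap !![a₁, b₁, c₁; c₂, a₂, b₂; b₃, c₃, a₃]) := by
  have hp : ∀ i, 0 < ![p₁, p₂, p₃] i := by
    intro i; fin_cases i <;> assumption
  have hle : ∀ i j, ((diagonal ![p₁, p₂, p₃])⁻¹ * !![a, b, c; c, a, b; b, c, a] *
      diagonal ![p₁, p₂, p₃]) i j ≤ !![a₁, b₁, c₁; c₂, a₂, b₂; b₃, c₃, a₃] i j :=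
    fun i j => sub_nonneg.mp (hM i j)
  exact PhiMap.isPosMap_of_le hle (PhiMap.isPosMap_diagonal_inv_mul_mul_diagonal hp hpos)

/-- If there are `a, b, c ≥ 0` and `p₁, p₂, p₃ > 0` such that `Φ_{[a,b,c]}`
is positive and `M = A - V⁻¹ A_{[a,b,c]} V` has nonnegative entries, where
`V = diag(p₁,p₂,p₃)`, then `Φ_A` is positive. -/
theorem phiMap_pos_of_exists_dominating (a₁ a₂ a₃ b₁ b₂ b₃ c₁ c₂ c₃ : ℝ)
    (ha₁ : 0 ≤ a₁) (ha₂ : 0 ≤ a₂) (ha₃ : 0 ≤ a₃)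
    (hb₁ : 0 ≤ b₁) (hb₂ : 0 ≤ b₂) (hb₃ : 0 ≤ b₃)
    (hc₁ : 0 ≤ c₁) (hc₂ : 0 ≤ c₂) (hc₃ : 0 ≤ c₃)
    (a b c : ℝ) (ha : 0 ≤ a) (hb : 0 ≤ b) (hc : 0 ≤ c)
    (p₁ p₂ p₃ : ℝ) (hp₁ : 0 < p₁) (hp₂ : 0 < p₂) (hp₃ : 0 < p₃)
    (hpos : IsPosMap (genChoiMap a b c))
    (hM : ∀ i j, 0 ≤ (!![a₁, b₁, c₁; c₂, a₂, b₂; b₃, c₃, a₃] -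
      (Matrix.diagonal ![p₁, p₂, p₃])⁻¹ * !![a, b, c; c, a, b; b, c, a] *
        Matrix.diagonal ![p₁, p₂, p₃]) i j) :
    IsPosMap (PhiMap !![a₁, b₁, c₁; c₂, a₂, b₂; b₃, c₃, a₃]) :=
  phiMap_pos_of_exists_dominating_general a₁ a₂ a₃ b₁ b₂ b₃ c₁ c₂ c₃ a b c p₁ p₂ p₃ hp₁ hp₂ hp₃ hpos
    hM
end
end

section
/- Let A be a 3×3 real matrix with rows (a_1,b_1,c_1), (c_2,a_2,b_2), (b_3,c_3,a_3) and all entries nonnegative. Suppose there exist reals a,b,c ≥ 0 such that: (1) the generalized Choi map Φ_{[a,b,c]} is positive; (2) min{a_1,a_2,a_3} ≥ a, (b_1b_2b_3)^{1/3} ≥ b, and (c_1c_2c_3)^{1/3} ≥ c; (3) b_i c_{i+1} ≥ bc for i = 1,2,3 (indices taken cyclically mod 3). Then Φ_A is positive. -/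
open Matrix
open scoped ComplexOrder

noncomputable section

/-!
Conjugating by a positive diagonal matrix `D = diag(√p)`, the map `X ↦ D⁻¹ Φ_C(D X D) D⁻¹` is
again of the form `Φ_{C'}` with `C'ᵢₖ = Cᵢₖ pₖ / pᵢ`, and raising the coefficients of `Φ` only
adds a positive diagonal term. Hence `Φ_A` is positive as soon as some weights `p > 0` satisfy
`Cᵢₖ pₖ ≤ Aᵢₖ pᵢ` for the circulant `C = [a, b, c]`. Off the diagonal these conditions say that
the cyclic ratios `yᵢ = pᵢ₊₁ / pᵢ` lie in the intervals `[c / cᵢ₊₁, bᵢ / b]`. These are nonempty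
because `b c ≤ bᵢ cᵢ₊₁`, and the bounds on the geometric means put `1` between the products of
the lower and of the upper endpoints, so the intermediate value theorem along the diagonal of
the box gives ratios with `∏ yᵢ = 1`, i.e. ratios coming from actual weights.
-/

lemma phiMap_eq_add_diagonal {n : ℕ} (A B : Matrix (Fin n) (Fin n) ℝ)
    (X : Matrix (Fin n) (Fin n) ℂ) :
    PhiMap B X = PhiMap A X + diagonal fun i => ∑ k, ((B i k - A i k : ℝ) : ℂ) * X k k := by
  ext i j
  by_cases h : i = j
  · subst h
    simp [PhiMap, sub_mul, Finset.sum_sub_distrib]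
  · simp [PhiMap, h]

theorem isPosMap_phiMap_of_le {n : ℕ} {A B : Matrix (Fin n) (Fin n) ℝ}
    (hA : IsPosMap (PhiMap A)) (hAB : ∀ i k, A i k ≤ B i k) : IsPosMap (PhiMap B) := by
  intro X hX
  rw [phiMap_eq_add_diagonal A]
  refine (hA X hX).add (PosSemidef.diagonal fun i => Finset.sum_nonneg fun k _ => ?_)
  exact mul_nonneg (Complex.zero_le_real.2 (sub_nonneg.2 (hAB i k))) hX.diag_nonneg

lemma phiMap_rescale_eq_conj {n : ℕ} (A : Matrix (Fin n) (Fin n) ℝ) {d : Fin n → ℝ}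
    (hd : ∀ i, d i ≠ 0) (X : Matrix (Fin n) (Fin n) ℂ) :
    PhiMap (of fun i k => A i k * d k ^ 2 / d i ^ 2) X =
      diagonal (fun i => (((d i)⁻¹ : ℝ) : ℂ)) *
        PhiMap A (diagonal (fun i => (d i : ℂ)) * X * diagonal (fun i => (d i : ℂ))) *
        diagonal (fun i => (((d i)⁻¹ : ℝ) : ℂ)) := by
  ext i j
  have hdi : (d i : ℂ) ≠ 0 := by exact_mod_cast hd i
  have hdj : (d j : ℂ) ≠ 0 := by exact_mod_cast hd j
  by_cases h : i = j
  · subst h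
    simp only [PhiMap, diagonal_mul, mul_diagonal, of_apply, if_true, Finset.mul_sum,
      Finset.sum_mul]
    refine Finset.sum_congr rfl fun k _ => ?_
    push_cast
    field_simp
  · simp only [PhiMap, diagonal_mul, mul_diagonal, of_apply, if_neg h]
    push_cast
    field_simp

lemma diagonal_ofReal_conjTranspose {n : ℕ} (e : Fin n → ℝ) :
    (diagonal fun i => (e i : ℂ))ᴴ = diagonal fun i => (e i : ℂ) := by
  simp [diagonal_conjTranspose, Pi.star_def]

theorem isPosMap_phiMap_rescale {n : ℕ} {A : Matrix (Fin n) (Fin n) ℝ}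
    (hA : IsPosMap (PhiMap A)) {d : Fin n → ℝ} (hd : ∀ i, d i ≠ 0) :
    IsPosMap (PhiMap (of fun i k => A i k * d k ^ 2 / d i ^ 2)) := by
  intro X hX
  have hDXD := hX.mul_mul_conjTranspose_same (diagonal fun i => (d i : ℂ))
  rw [diagonal_ofReal_conjTranspose] at hDXD
  have hconj := (hA _ hDXD).mul_mul_conjTranspose_same (diagonal fun i => (((d i)⁻¹ : ℝ) : ℂ))
  rw [diagonal_ofReal_conjTranspose] at hconj
  rwa [phiMap_rescale_eq_conj A hd]

theorem isPosMap_phiMap_of_mul_le {n : ℕ} {A B : Matrix (Fin n) (Fin n) ℝ}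
    (hA : IsPosMap (PhiMap A)) {p : Fin n → ℝ} (hp : ∀ i, 0 < p i)
    (hAB : ∀ i k, A i k * p k ≤ B i k * p i) : IsPosMap (PhiMap B) := by
  refine isPosMap_phiMap_of_le (isPosMap_phiMap_rescale hA (d := fun i => √(p i))
    fun i => (Real.sqrt_pos.2 (hp i)).ne') fun i k => ?_
  rw [of_apply, Real.sq_sqrt (hp k).le, Real.sq_sqrt (hp i).le, div_le_iff₀ (hp i)]
  exact hAB i k

theorem exists_mem_Icc_prod_eq {ι : Type*} [Fintype ι] {L U : ι → ℝ} (hLU : L ≤ U) {r : ℝ}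
    (hL : ∏ i, L i ≤ r) (hU : r ≤ ∏ i, U i) :
    ∃ y : ι → ℝ, (∀ i, y i ∈ Set.Icc (L i) (U i)) ∧ ∏ i, y i = r := by
  have hf : Continuous fun θ : ℝ => ∏ i, (L i + θ * (U i - L i)) := by fun_prop
  obtain ⟨θ, ⟨hθ₀, hθ₁⟩, hθ⟩ := intermediate_value_Icc zero_le_one hf.continuousOn
    ⟨by simpa using hL, by simpa using hU⟩
  refine ⟨fun i => L i + θ * (U i - L i), fun i => ⟨?_, ?_⟩, hθ⟩ <;>
    nlinarith [sub_nonneg.2 (hLU i)]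

lemma pos_of_pow_card_le_prod {ι : Type*} [Fintype ι] {b : ℝ} {β : ι → ℝ} (hb : 0 < b)
    (hβ : ∀ i, 0 ≤ β i) (hbβ : b ^ Fintype.card ι ≤ ∏ i, β i) (i : ι) : 0 < β i :=
  (hβ i).lt_of_ne' <| Finset.prod_ne_zero_iff.mp ((pow_pos hb _).trans_le hbβ).ne'
    i (Finset.mem_univ i)

theorem exists_pos_prod_eq_one_of_mul_le {ι : Type*} [Fintype ι] {b c : ℝ} {β γ : ι → ℝ}
    (hb : 0 ≤ b) (hc : 0 ≤ c) (hβ : ∀ i, 0 ≤ β i) (hγ : ∀ i, 0 ≤ γ i)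
    (hbβ : b ^ Fintype.card ι ≤ ∏ i, β i) (hcγ : c ^ Fintype.card ι ≤ ∏ i, γ i)
    (hbc : ∀ i, b * c ≤ β i * γ i) :
    ∃ y : ι → ℝ, (∀ i, 0 < y i) ∧ ∏ i, y i = 1 ∧ (∀ i, b * y i ≤ β i) ∧ ∀ i, c ≤ γ i * y i := by
  have prod_lower (hc : 0 < c) (hγ : ∀ i, 0 < γ i) : ∏ i, c / γ i ≤ 1 := by
    rw [Finset.prod_div_distrib, Finset.prod_const, Finset.card_univ,
      div_le_one (Finset.prod_pos fun i _ => hγ i)]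
    exact hcγ
  have prod_upper (hb : 0 < b) : 1 ≤ ∏ i, β i / b := by
    rw [Finset.prod_div_distrib, Finset.prod_const, Finset.card_univ,
      one_le_div (pow_pos hb _)]
    exact hbβ
  -- When `b = 0` or `c = 0` one side of the box `[c / γᵢ, β i / b]` is unbounded; cap it at `1`.
  rcases hb.eq_or_lt with rfl | hb <;> rcases hc.eq_or_lt with rfl | hc
  · exact ⟨1, fun _ => one_pos, by simp, by simpa using hβ, by simpa using hγ⟩
  · have hγ := pos_of_pow_card_le_prod hc hγ hcγ
    obtain ⟨y, hy, hprod⟩ := exists_mem_Icc_prod_eq (L := fun i => c / γ i)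
      (U := fun i => max (c / γ i) 1) (fun i => le_max_left _ _) (prod_lower hc hγ)
      (Finset.one_le_prod fun i _ => le_max_right _ _)
    exact ⟨y, fun i => (div_pos hc (hγ i)).trans_le (hy i).1, hprod, by simpa using hβ,
      fun i => (div_le_iff₀' (hγ i)).mp (hy i).1⟩
  · have hβ := pos_of_pow_card_le_prod hb hβ hbβ
    have hL : ∀ i, 0 < min (β i / b) 1 := fun i => lt_min (div_pos (hβ i) hb) one_pos
    obtain ⟨y, hy, hprod⟩ := exists_mem_Icc_prod_eq (L := fun i => min (β i / b) 1)
      (U := fun i => β i / b) (fun i => min_le_left _ _)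
      (Finset.prod_le_one (fun i _ => (hL i).le) fun i _ => min_le_right _ _) (prod_upper hb)
    exact ⟨y, fun i => (hL i).trans_le (hy i).1, hprod, fun i => (le_div_iff₀' hb).mp (hy i).2,
      fun i => mul_nonneg (hγ i) ((hL i).le.trans (hy i).1)⟩
  · have hβ := pos_of_pow_card_le_prod hb hβ hbβ
    have hγ := pos_of_pow_card_le_prod hc hγ hcγ
    obtain ⟨y, hy, hprod⟩ := exists_mem_Icc_prod_eq (L := fun i => c / γ i)
      (U := fun i => β i / b) (fun i => (div_le_div_iff₀ (hγ i) hb).2 (by linarith [hbc i]))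
      (prod_lower hc hγ) (prod_upper hb)
    exact ⟨y, fun i => (div_pos hc (hγ i)).trans_le (hy i).1, hprod,
      fun i => (le_div_iff₀' hb).mp (hy i).2, fun i => (div_le_iff₀' (hγ i)).mp (hy i).1⟩

lemma pow_le_of_le_rpow_one_div {x b : ℝ} {n : ℕ} (hn : n ≠ 0) (hx : 0 ≤ x) (hb : 0 ≤ b)
    (h : b ≤ x ^ ((1 : ℝ) / n)) : b ^ n ≤ x := by
  rwa [one_div, Real.le_rpow_inv_iff_of_pos hb hx (by positivity), Real.rpow_natCast] at h

theorem phiMap_pos_of_coefficient_bounds_general (a₁ a₂ a₃ b₁ b₂ b₃ c₁ c₂ c₃ : ℝ)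
    (hb₁ : 0 ≤ b₁) (hb₂ : 0 ≤ b₂) (hb₃ : 0 ≤ b₃)
    (hc₁ : 0 ≤ c₁) (hc₂ : 0 ≤ c₂) (hc₃ : 0 ≤ c₃)
    (a b c : ℝ) (hb : 0 ≤ b) (hc : 0 ≤ c)
    (hpos : IsPosMap (genChoiMap a b c))
    (haa : a ≤ min a₁ (min a₂ a₃))
    (hbb : b ≤ (b₁ * b₂ * b₃) ^ ((1 : ℝ) / 3))
    (hcc : c ≤ (c₁ * c₂ * c₃) ^ ((1 : ℝ) / 3))
    (hbc₁ : b * c ≤ b₁ * c₂) (hbc₂ : b * c ≤ b₂ * c₃) (hbc₃ : b * c ≤ b₃ * c₁) :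
    IsPosMap (PhiMap !![a₁, b₁, c₁; c₂, a₂, b₂; b₃, c₃, a₃]) := by
  have hb3 : b ^ 3 ≤ b₁ * b₂ * b₃ :=
    pow_le_of_le_rpow_one_div three_ne_zero (by positivity) hb (by exact_mod_cast hbb)
  have hc3 : c ^ 3 ≤ c₁ * c₂ * c₃ :=
    pow_le_of_le_rpow_one_div three_ne_zero (by positivity) hc (by exact_mod_cast hcc)
  obtain ⟨y, hy, hy_prod, hby, hcy⟩ :=
    exists_pos_prod_eq_one_of_mul_le (β := ![b₁, b₂, b₃]) (γ := ![c₂, c₃, c₁]) hb hc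
      (by simp [Fin.forall_fin_succ, *]) (by simp [Fin.forall_fin_succ, *])
      (by simpa [Fin.prod_univ_three] using hb3) (by simp [Fin.prod_univ_three]; linarith)
      (by simp [Fin.forall_fin_succ, *])
  simp only [Fin.prod_univ_three] at hy_prod
  have hy_pos : 0 < y 0 ∧ 0 < y 1 ∧ 0 < y 2 := ⟨hy 0, hy 1, hy 2⟩
  have hby_le : b * y 0 ≤ b₁ ∧ b * y 1 ≤ b₂ ∧ b * y 2 ≤ b₃ := ⟨hby 0, hby 1, hby 2⟩
  have hcy_le : c ≤ c₂ * y 0 ∧ c ≤ c₃ * y 1 ∧ c ≤ c₁ * y 2 := ⟨hcy 0, hcy 1, hcy 2⟩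
  simp only [le_min_iff] at haa
  refine isPosMap_phiMap_of_mul_le hpos (p := ![1, y 0, y 0 * y 1]) ?_ fun i k => ?_
  · intro i
    fin_cases i <;> simp [hy_pos.1, hy_pos.2.1]
  · fin_cases i <;> fin_cases k <;> simp <;> nlinarith

/-- If there exist `a, b, c ≥ 0` with `Φ_{[a,b,c]}` positive,
`min{a₁,a₂,a₃} ≥ a`, `(b₁b₂b₃)^{1/3} ≥ b`, `(c₁c₂c₃)^{1/3} ≥ c` and `bᵢc_{i+1} ≥ bc`
cyclically, then `Φ_A` is positive. -/
theorem phiMap_pos_of_coefficient_bounds (a₁ a₂ a₃ b₁ b₂ b₃ c₁ c₂ c₃ : ℝ)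
    (ha₁ : 0 ≤ a₁) (ha₂ : 0 ≤ a₂) (ha₃ : 0 ≤ a₃)
    (hb₁ : 0 ≤ b₁) (hb₂ : 0 ≤ b₂) (hb₃ : 0 ≤ b₃)
    (hc₁ : 0 ≤ c₁) (hc₂ : 0 ≤ c₂) (hc₃ : 0 ≤ c₃)
    (a b c : ℝ) (ha : 0 ≤ a) (hb : 0 ≤ b) (hc : 0 ≤ c)
    (hpos : IsPosMap (genChoiMap a b c))
    (haa : a ≤ min a₁ (min a₂ a₃))
    (hbb : b ≤ (b₁ * b₂ * b₃) ^ ((1 : ℝ) / 3))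
    (hcc : c ≤ (c₁ * c₂ * c₃) ^ ((1 : ℝ) / 3))
    (hbc₁ : b * c ≤ b₁ * c₂) (hbc₂ : b * c ≤ b₂ * c₃) (hbc₃ : b * c ≤ b₃ * c₁) :
    IsPosMap (PhiMap !![a₁, b₁, c₁; c₂, a₂, b₂; b₃, c₃, a₃]) :=
  phiMap_pos_of_coefficient_bounds_general a₁ a₂ a₃ b₁ b₂ b₃ c₁ c₂ c₃ hb₁ hb₂ hb₃ hc₁ hc₂ hc₃ a b c
    hb hc hpos haa hbb hcc hbc₁ hbc₂ hbc₃
end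
end

section
/- Let A = (a_{ij}) be an n×n real matrix with nonnegative entries and let Φ_A(X) = Δ_A(X) − X, where Δ_A(X) is the diagonal matrix with i-th diagonal entry Σ_j (a_{ij}+δ_{ij}) x_{jj}. Then Φ_A is positive if and only if for all nonnegative reals p_1,…,p_n, q_1,…,q_n one has Σ_{i,j} (a_{ij}+δ_{ij}) p_i² q_j² ≥ (Σ_i p_i q_i)². -/
open Matrix
open scoped ComplexOrder

noncomputable section

/-!
For positive semidefinite `X`, the quadratic form of `Φ_A(X)` at `w` is
`∑ (a_{ij} + δ_{ij}) |w_i|² x_{jj} - w* X w`, and the Cauchy–Schwarz bound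
`|x_{ij}| ≤ √x_{ii} √x_{jj}` gives `w* X w ≤ (∑ |w_i| √x_{ii})²`; so the inequality with
`p_i = |w_i|`, `q_j = √x_{jj}` makes the form nonnegative. Conversely, the form of `Φ_A(q qᵀ)` at
the real vector `p` is exactly the difference of the two sides of the inequality.
-/

lemma Complex.eq_ofReal_re_of_nonneg {z : ℂ} (hz : 0 ≤ z) : z = z.re :=
  eq_re_of_ofReal_le (r := 0) (by simpa using hz)

namespace Matrix.PosSemidef

variable {ι : Type*} [Fintype ι] [DecidableEq ι] {X : Matrix ι ι ℂ}

lemma norm_apply_le (hX : X.PosSemidef) (i j : ι) :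
    ‖X i j‖ ≤ √(X i i).re * √(X j j).re := by
  obtain ⟨B, rfl⟩ : ∃ B : Matrix ι ι ℂ, X = Bᴴ * B := by
    open scoped MatrixOrder in
    exact CStarAlgebra.nonneg_iff_eq_star_mul_self.mp hX.nonneg
  let col : ι → EuclideanSpace ℂ ι := fun i => WithLp.toLp 2 fun k => B k i
  have inner_col : ∀ i j, (Bᴴ * B) i j = inner ℂ (col i) (col j) := fun i j => by
    simp only [mul_apply, conjTranspose_apply, PiLp.inner_apply, col, RCLike.inner_apply]
    exact Finset.sum_congr rfl fun k _ => mul_comm _ _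
  have norm_col : ∀ i, ‖col i‖ = √((Bᴴ * B) i i).re := fun i => by
    rw [@norm_eq_sqrt_re_inner ℂ, inner_col]
    rfl
  rw [inner_col, ← norm_col, ← norm_col]
  exact norm_inner_le_norm _ _

lemma re_star_dotProduct_mulVec_le (hX : X.PosSemidef) (w : ι → ℂ) :
    (star w ⬝ᵥ X *ᵥ w).re ≤ (∑ i, ‖w i‖ * √(X i i).re) ^ 2 := by
  have expand : star w ⬝ᵥ X *ᵥ w = ∑ i, ∑ j, star (w i) * (X i j * w j) := by
    simp only [dotProduct, mulVec, Finset.mul_sum, Pi.star_apply]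
  calc (star w ⬝ᵥ X *ᵥ w).re
      ≤ ‖∑ i, ∑ j, star (w i) * (X i j * w j)‖ := expand ▸ Complex.re_le_norm _
    _ ≤ ∑ i, ∑ j, ‖w i‖ * (√(X i i).re * √(X j j).re * ‖w j‖) := by
        refine (norm_sum_le _ _).trans (Finset.sum_le_sum fun i _ => ?_)
        refine (norm_sum_le _ _).trans (Finset.sum_le_sum fun j _ => ?_)
        rw [norm_mul, norm_mul, norm_star]
        gcongr
        exact hX.norm_apply_le i j
    _ = (∑ i, ‖w i‖ * √(X i i).re) ^ 2 := by
        rw [sq, Finset.sum_mul_sum]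
        exact Finset.sum_congr rfl fun i _ => Finset.sum_congr rfl fun j _ => by ring

end Matrix.PosSemidef

lemma star_dotProduct_diagonal_ofReal_mulVec {ι : Type*} [Fintype ι] [DecidableEq ι]
    (c : ι → ℝ) (w : ι → ℂ) :
    star w ⬝ᵥ diagonal (fun i => (c i : ℂ)) *ᵥ w = ((∑ i, c i * ‖w i‖ ^ 2 : ℝ) : ℂ) := by
  simp only [mulVec_diagonal, dotProduct, Pi.star_apply, Complex.ofReal_sum, Complex.ofReal_mul,
    Complex.ofReal_pow, ← Complex.conj_mul', Complex.star_def]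
  exact Finset.sum_congr rfl fun i _ => by ring

section PhiDelta

variable {n : ℕ} (A : Matrix (Fin n) (Fin n) ℝ)

lemma deltaMap_eq_diagonal_ofReal {X : Matrix (Fin n) (Fin n) ℂ} {d : Fin n → ℝ}
    (hd : ∀ j, X j j = d j) :
    DeltaMap A X =
      diagonal fun i => ((∑ j, (A i j + if i = j then 1 else 0) * d j : ℝ) : ℂ) := by
  simp only [DeltaMap, hd, Complex.ofReal_sum, Complex.ofReal_mul, Complex.ofReal_add,
    apply_ite Complex.ofReal, Complex.ofReal_one, Complex.ofReal_zero]

lemma star_dotProduct_phiDelta_mulVec {X : Matrix (Fin n) (Fin n) ℂ} {d : Fin n → ℝ}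
    (hd : ∀ j, X j j = d j) (w : Fin n → ℂ) :
    star w ⬝ᵥ PhiDelta A X *ᵥ w =
      ((∑ i, ∑ j, (A i j + if i = j then 1 else 0) * ‖w i‖ ^ 2 * d j : ℝ) : ℂ)
        - star w ⬝ᵥ X *ᵥ w := by
  rw [PhiDelta, sub_mulVec, dotProduct_sub, deltaMap_eq_diagonal_ofReal A hd,
    star_dotProduct_diagonal_ofReal_mulVec]
  simp_rw [Finset.sum_mul, mul_right_comm _ (d _)]

lemma sq_sum_mul_le_of_isPosMap_phiDelta (hΦ : IsPosMap (PhiDelta A)) (p q : Fin n → ℝ) :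
    (∑ i, p i * q i) ^ 2 ≤ ∑ i, ∑ j, (A i j + if i = j then 1 else 0) * p i ^ 2 * q j ^ 2 := by
  let pC : Fin n → ℂ := fun i => p i
  let qC : Fin n → ℂ := fun i => q i
  have hd : ∀ j, vecMulVec qC (star qC) j j = ((q j ^ 2 : ℝ) : ℂ) := fun j => by
    simp [vecMulVec_apply, qC, sq]
  have hform : star pC ⬝ᵥ vecMulVec qC (star qC) *ᵥ pC = (((∑ i, p i * q i) ^ 2 : ℝ) : ℂ) := by
    rw [dotProduct_mulVec, vecMul_vecMulVec, smul_dotProduct, smul_eq_mul, dotProduct_comm, sq]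
    simp [dotProduct, pC, qC, mul_comm]
  have hnonneg := (hΦ _ (posSemidef_vecMulVec_self_star qC)).dotProduct_mulVec_nonneg pC
  rw [star_dotProduct_phiDelta_mulVec A hd, hform, ← Complex.ofReal_sub, Complex.zero_le_real,
    sub_nonneg] at hnonneg
  simpa [pC] using hnonneg

lemma isPosMap_phiDelta_of_sq_sum_mul_le
    (h : ∀ p q : Fin n → ℝ, (∀ i, 0 ≤ p i) → (∀ i, 0 ≤ q i) →
      (∑ i, p i * q i) ^ 2 ≤ ∑ i, ∑ j, (A i j + if i = j then 1 else 0) * p i ^ 2 * q j ^ 2) :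
    IsPosMap (PhiDelta A) := by
  intro X hX
  have hd : ∀ j, X j j = ((X j j).re : ℂ) := fun j => Complex.eq_ofReal_re_of_nonneg hX.diag_nonneg
  refine .of_dotProduct_mulVec_nonneg ?_ fun w => ?_
  · rw [PhiDelta, deltaMap_eq_diagonal_ofReal A hd]
    exact (isHermitian_diagonal_of_self_adjoint _ (funext fun i => Complex.conj_ofReal _)).sub hX.1
  rw [star_dotProduct_phiDelta_mulVec A hd,
    Complex.eq_ofReal_re_of_nonneg (hX.dotProduct_mulVec_nonneg w), ← Complex.ofReal_sub,
    Complex.zero_le_real, sub_nonneg]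
  have key := h (‖w ·‖) (fun j => √(X j j).re) (fun _ => norm_nonneg _)
    fun _ => Real.sqrt_nonneg _
  refine (hX.re_star_dotProduct_mulVec_le w).trans (key.trans_eq
    (Finset.sum_congr rfl fun i _ => Finset.sum_congr rfl fun j _ => ?_))
  rw [Real.sq_sqrt (Complex.nonneg_iff.mp hX.diag_nonneg).1]

end PhiDelta

theorem phiDelta_pos_iff_general (n : ℕ) (A : Matrix (Fin n) (Fin n) ℝ) :
    IsPosMap (PhiDelta A) ↔ ∀ p q : Fin n → ℝ, (∀ i, 0 ≤ p i) → (∀ i, 0 ≤ q i) →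
      (∑ i, p i * q i) ^ 2 ≤
        ∑ i, ∑ j, (A i j + if i = j then 1 else 0) * (p i) ^ 2 * (q j) ^ 2 :=
  ⟨fun hΦ p q _ _ => sq_sum_mul_le_of_isPosMap_phiDelta A hΦ p q,
    isPosMap_phiDelta_of_sq_sum_mul_le A⟩

/-- `Φ_A(X) = Δ_A(X) - X` is positive iff
`∑_{ij} (a_{ij}+δ_{ij}) pᵢ² qⱼ² ≥ (∑ᵢ pᵢqᵢ)²` for all nonnegative `pᵢ, qᵢ`. -/
theorem phiDelta_pos_iff (n : ℕ) (A : Matrix (Fin n) (Fin n) ℝ) (hA : ∀ i j, 0 ≤ A i j) :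
    IsPosMap (PhiDelta A) ↔ ∀ p q : Fin n → ℝ, (∀ i, 0 ≤ p i) → (∀ i, 0 ≤ q i) →
      (∑ i, p i * q i) ^ 2 ≤
        ∑ i, ∑ j, (A i j + if i = j then 1 else 0) * (p i) ^ 2 * (q j) ^ 2 :=
  phiDelta_pos_iff_general n A
end
end

section
/- Let A = (a_{ij}) be an n×n real matrix with nonnegative entries and let Φ_A(X) = Δ_A(X) − X. If the map Φ_A is positive, then √(a_{ii}a_{jj}) + √(a_{ij}a_{ji}) ≥ 1 for all i ≠ j. -/
open Matrix
open scoped ComplexOrder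

noncomputable section

/-!
Apply `Φ_A` to the rank-one projection onto `√u eᵢ + √v eⱼ` with `u, v ≥ 0`. The `2 × 2`
principal minor of the image at `{i, j}` gives `uv ≤ (aᵢᵢu + aᵢⱼv)(aⱼᵢu + aⱼⱼv)`, i.e. the binary
form `aᵢᵢaⱼᵢ u² + (aᵢᵢaⱼⱼ + aᵢⱼaⱼᵢ - 1) uv + aᵢⱼaⱼⱼ v²` is copositive. Copositivity of
`p u² + r uv + q v²` forces `r ≥ -2√(pq)`, which here reads `(√(aᵢᵢaⱼⱼ) + √(aᵢⱼaⱼᵢ))² ≥ 1`.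
-/

lemma Matrix.PosSemidef.apply_mul_apply_le {𝕜 ι : Type*} [RCLike 𝕜] [DecidableEq ι]
    {M : Matrix ι ι 𝕜} (hM : M.PosSemidef) (i j : ι) : M i j * M j i ≤ M i i * M j j := by
  have h := (hM.submatrix ![i, j]).det_nonneg
  rw [det_fin_two] at h
  simpa [sub_nonneg] using h

lemma neg_two_sqrt_mul_le_of_forall_nonneg {p q r : ℝ}
    (h : ∀ u v : ℝ, 0 ≤ u → 0 ≤ v → 0 ≤ p * u ^ 2 + r * u * v + q * v ^ 2) :
    -(2 * √(p * q)) ≤ r := by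
  have hp : 0 ≤ p := by simpa using h 1 0 zero_le_one le_rfl
  have hq : 0 ≤ q := by simpa using h 0 1 le_rfl zero_le_one
  rcases (mul_nonneg hp hq).eq_or_lt with hpq | hpq
  · rw [← hpq, Real.sqrt_zero, mul_zero, neg_zero]
    by_contra! hr
    rcases mul_eq_zero.mp hpq.symm with rfl | rfl
    · nlinarith [h (q + 1) (-r) (by linarith) (by linarith)]
    · nlinarith [h (-r) (p + 1) (by linarith) (by linarith)]
  · have hpq' : 0 < √p * √q := by rw [← Real.sqrt_mul hp]; exact Real.sqrt_pos.mpr hpq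
    have := h √q √p (Real.sqrt_nonneg q) (Real.sqrt_nonneg p)
    rw [Real.sq_sqrt hp, Real.sq_sqrt hq] at this
    rw [Real.sqrt_mul hp]
    nlinarith [Real.mul_self_sqrt hp, Real.mul_self_sqrt hq]

lemma one_le_sqrt_mul_add_sqrt_mul {α β γ δ : ℝ} (hα : 0 ≤ α) (hβ : 0 ≤ β) (hγ : 0 ≤ γ)
    (hδ : 0 ≤ δ)
    (h : ∀ u v : ℝ, 0 ≤ u → 0 ≤ v → u * v ≤ (α * u + γ * v) * (δ * u + β * v)) :
    1 ≤ √(α * β) + √(γ * δ) := by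
  have hcop := neg_two_sqrt_mul_le_of_forall_nonneg (p := α * δ) (q := γ * β)
    (r := α * β + γ * δ - 1) fun u v hu hv => by linear_combination h u v hu hv
  rw [show α * δ * (γ * β) = α * β * (γ * δ) by ring,
    Real.sqrt_mul (mul_nonneg hα hβ)] at hcop
  have hsq : 1 ≤ (√(α * β) + √(γ * δ)) ^ 2 := by
    nlinarith [Real.sq_sqrt (mul_nonneg hα hβ), Real.sq_sqrt (mul_nonneg hγ hδ)]
  exact (one_le_sq_iff₀ (by positivity)).mp hsq

section PhiDelta

variable {n : ℕ} (A : Matrix (Fin n) (Fin n) ℝ) (X : Matrix (Fin n) (Fin n) ℂ)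

lemma phiDelta_apply_self (i : Fin n) : PhiDelta A X i i = ∑ k, (A i k : ℂ) * X k k := by
  simp [PhiDelta, DeltaMap, add_mul, Finset.sum_add_distrib]

lemma phiDelta_apply_of_ne {i j : Fin n} (hij : i ≠ j) : PhiDelta A X i j = -X i j := by
  simp [PhiDelta, DeltaMap, hij]

end PhiDelta

lemma mul_le_of_isPosMap_phiDelta {n : ℕ} {A : Matrix (Fin n) (Fin n) ℝ}
    (hpos : IsPosMap (PhiDelta A)) {i j : Fin n} (hij : i ≠ j) {u v : ℝ} (hu : 0 ≤ u)
    (hv : 0 ≤ v) : u * v ≤ (A i i * u + A i j * v) * (A j i * u + A j j * v) := by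
  set w : Fin n → ℝ := Pi.single i u + Pi.single j v
  have hw : 0 ≤ w := add_nonneg (Pi.single_nonneg.mpr hu) (Pi.single_nonneg.mpr hv)
  set X := vecMulVec (fun k => (√(w k) : ℂ)) (star fun k => (√(w k) : ℂ))
  have hXdiag : ∀ k, X k k = w k := fun k => by
    simp [X, vecMulVec_apply, ← Complex.ofReal_mul, Real.mul_self_sqrt (hw k)]
  have hX : X i j * X j i = X i i * X j j := by simp only [X, vecMulVec_apply]; ring
  have hsum : ∀ l, ∑ k, (A l k : ℂ) * X k k = ((A l i * u + A l j * v : ℝ) : ℂ) := fun l => by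
    have : ∑ k, A l k * w k = A l i * u + A l j * v := by
      simp [w, Pi.single_apply, mul_add, Finset.sum_add_distrib]
    simp only [hXdiag, ← this, Complex.ofReal_sum, Complex.ofReal_mul]
  have key := (hpos X (posSemidef_vecMulVec_self_star _)).apply_mul_apply_le i j
  rw [phiDelta_apply_of_ne A X hij, phiDelta_apply_of_ne A X hij.symm, neg_mul_neg, hX,
    phiDelta_apply_self, phiDelta_apply_self, hsum, hsum, hXdiag, hXdiag] at key
  simp only [w, Pi.add_apply, Pi.single_eq_same, Pi.single_eq_of_ne hij,
    Pi.single_eq_of_ne hij.symm, add_zero, zero_add] at key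
  exact_mod_cast key

/-- If `Φ_A(X) = Δ_A(X) - X` is positive, then
`√(a_{ii}a_{jj}) + √(a_{ij}a_{ji}) ≥ 1` for all `i ≠ j`. -/
theorem phiDelta_pos_implies_local (n : ℕ) (A : Matrix (Fin n) (Fin n) ℝ)
    (hA : ∀ i j, 0 ≤ A i j) (hpos : IsPosMap (PhiDelta A)) :
    ∀ i j, i ≠ j → 1 ≤ Real.sqrt (A i i * A j j) + Real.sqrt (A i j * A j i) := by
  intro i j hij
  exact one_le_sqrt_mul_add_sqrt_mul (hA i i) (hA j j) (hA i j) (hA j i)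
    fun u v hu hv => mul_le_of_isPosMap_phiDelta hpos hij hu hv
end
end

section
/- Let A = (a_{ij}) be a 2×2 real matrix with nonnegative entries. The map Φ_A(X) = Δ_A(X) − X on M_2(ℂ) is positive if and only if √(a_{11}a_{22}) + √(a_{12}a_{21}) ≥ 1. -/
open Matrix
open scoped ComplexOrder

noncomputable section

/-!
A Hermitian matrix `!![a, z; z̄, b]` is positive semidefinite iff `a, b ≥ 0` and `|z|² ≤ ab`.
`Φ_A` sends it to the matrix with diagonal `(a₁₁a + a₁₂b, a₂₁a + a₂₂b)` and off-diagonal `-z`,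
so `Φ_A` is positive iff `st ≤ (a₁₁s + a₁₂t)(a₂₁s + a₂₂t)` for all `s, t ≥ 0`. This says that the
binary form `a₁₁a₂₁ s² + (a₁₁a₂₂ + a₁₂a₂₁ - 1) st + a₁₂a₂₂ t²` is nonnegative on the positive
quadrant, i.e. that its middle coefficient is at least
`-2√(a₁₁a₂₁a₁₂a₂₂) = -2√(a₁₁a₂₂)√(a₁₂a₂₁)`, which rearranges to
`(√(a₁₁a₂₂) + √(a₁₂a₂₁))² ≥ 1`.
-/

lemma two_mul_mul_le_of_sq_le {a b w : ℝ} (ha : 0 ≤ a) (hb : 0 ≤ b) (hw : w ^ 2 ≤ a * b)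
    (x y : ℝ) : 2 * w * x * y ≤ a * x ^ 2 + b * y ^ 2 := by
  have hw' : |w| ≤ √a * √b := by
    rw [← Real.sqrt_mul ha, ← Real.sqrt_sq_eq_abs]
    exact Real.sqrt_le_sqrt hw
  calc 2 * w * x * y ≤ 2 * |w| * |x| * |y| := by
        have := le_abs_self (w * x * y)
        rw [abs_mul, abs_mul] at this
        linarith
    _ ≤ 2 * (√a * |x|) * (√b * |y|) := by
        have := mul_le_mul_of_nonneg_right hw' (mul_nonneg (abs_nonneg x) (abs_nonneg y))
        nlinarith
    _ ≤ (√a * |x|) ^ 2 + (√b * |y|) ^ 2 := two_mul_le_add_sq _ _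
    _ = a * x ^ 2 + b * y ^ 2 := by
        rw [mul_pow, mul_pow, Real.sq_sqrt ha, Real.sq_sqrt hb, sq_abs, sq_abs]

lemma quadratic_nonneg_on_orthant_iff {α β γ : ℝ} (hα : 0 ≤ α) (hγ : 0 ≤ γ) :
    (∀ s t : ℝ, 0 ≤ s → 0 ≤ t → 0 ≤ α * s ^ 2 + β * s * t + γ * t ^ 2) ↔
      -(2 * √(α * γ)) ≤ β := by
  have hr2 : √(α * γ) ^ 2 = α * γ := Real.sq_sqrt (mul_nonneg hα hγ)
  have hsq : √γ * √α = √(α * γ) := by rw [mul_comm α, Real.sqrt_mul hγ]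
  have hr0 := Real.sqrt_nonneg (α * γ)
  generalize √(α * γ) = r at *
  constructor
  · intro h
    rcases hr0.eq_or_lt with rfl | hrpos
    · rw [mul_zero, neg_zero]
      by_contra! hβ
      -- one of `α, γ` vanishes, and along the other axis the form is affine with slope `β < 0`
      rcases mul_eq_zero.1 (by rw [← hr2]; ring : α * γ = 0) with hα0 | hγ0
      · have := h ((γ + 1) / -β) 1 (div_nonneg (by linarith) (by linarith)) zero_le_one
        have e : β * ((γ + 1) / -β) = -(γ + 1) := by field_simp [hβ.ne]
        rw [hα0, e] at this
        linarith
      · have := h 1 ((α + 1) / -β) zero_le_one (div_nonneg (by linarith) (by linarith))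
        have e : β * 1 * ((α + 1) / -β) = -(α + 1) := by field_simp [hβ.ne]
        rw [hγ0, e] at this
        linarith
    · -- `(√γ, √α)` is where the AM-GM bound `αs² + γt² ≥ 2rst` is attained
      have h' := h √γ √α (Real.sqrt_nonneg _) (Real.sqrt_nonneg _)
      rw [Real.sq_sqrt hγ, Real.sq_sqrt hα, mul_assoc, hsq] at h'
      nlinarith
  · intro hβ s t hs ht
    have := two_mul_mul_le_of_sq_le hα hγ hr2.le s t
    nlinarith [mul_nonneg (mul_nonneg hs ht) (by linarith : 0 ≤ β + 2 * r)]

lemma one_le_sqrt_add_sqrt_iff {a b c d : ℝ} (ha : 0 ≤ a) (hb : 0 ≤ b) (hc : 0 ≤ c)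
    (hd : 0 ≤ d) :
    1 ≤ √(a * d) + √(b * c) ↔
      ∀ s t : ℝ, 0 ≤ s → 0 ≤ t → s * t ≤ (a * s + b * t) * (c * s + d * t) := by
  have hexpand (s t : ℝ) : (a * s + b * t) * (c * s + d * t) - s * t =
      a * c * s ^ 2 + (a * d + b * c - 1) * s * t + b * d * t ^ 2 := by ring
  have hroot : √(a * c * (b * d)) = √(a * d) * √(b * c) := by
    rw [← Real.sqrt_mul (mul_nonneg ha hd)]
    ring_nf
  simp_rw [← sub_nonneg (b := (_ : ℝ) * _), hexpand]
  rw [quadratic_nonneg_on_orthant_iff (mul_nonneg ha hc) (mul_nonneg hb hd), hroot]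
  have hp := Real.sq_sqrt (mul_nonneg ha hd)
  have hq := Real.sq_sqrt (mul_nonneg hb hc)
  have hp0 := Real.sqrt_nonneg (a * d)
  have hq0 := Real.sqrt_nonneg (b * c)
  constructor <;> intro h <;> nlinarith

namespace Matrix

lemma IsHermitian.eq_fin_two {M : Matrix (Fin 2) (Fin 2) ℂ} (hM : M.IsHermitian) :
    M = !![((M 0 0).re : ℂ), M 0 1; star (M 0 1), ((M 1 1).re : ℂ)] := by
  ext i j
  fin_cases i <;> fin_cases j
  · exact (hM.coe_re_apply_self 0).symm
  · rfl
  · exact (hM.apply 1 0).symm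
  · exact (hM.coe_re_apply_self 1).symm

lemma star_dotProduct_mulVec_fin_two (a b : ℝ) (z : ℂ) (v : Fin 2 → ℂ) :
    star v ⬝ᵥ (!![(a : ℂ), z; star z, (b : ℂ)] *ᵥ v) =
      ((a * ‖v 0‖ ^ 2 + b * ‖v 1‖ ^ 2 + 2 * (z * star (v 0) * v 1).re : ℝ) : ℂ) := by
  simp only [dotProduct, mulVec, Fin.sum_univ_two, Pi.star_apply, of_apply, cons_val',
    cons_val_zero, cons_val_one, empty_val', cons_val_fin_one]
  apply Complex.ext <;>
    simp [← Complex.normSq_eq_norm_sq, Complex.normSq_apply, Complex.mul_re, Complex.mul_im] <;>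
    ring

theorem posSemidef_fin_two_iff {a b : ℝ} {z : ℂ} :
    (!![(a : ℂ), z; star z, (b : ℂ)]).PosSemidef ↔
      0 ≤ a ∧ 0 ≤ b ∧ Complex.normSq z ≤ a * b := by
  constructor
  · intro h
    have hdet := h.det_nonneg
    rw [det_fin_two_of, Complex.star_def, Complex.mul_conj, ← Complex.ofReal_mul,
      ← Complex.ofReal_sub, Complex.zero_le_real, sub_nonneg] at hdet
    exact ⟨by simpa using h.diag_nonneg (i := 0), by simpa using h.diag_nonneg (i := 1), hdet⟩
  · rintro ⟨ha, hb, hz⟩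
    refine .of_dotProduct_mulVec_nonneg ?_ fun v => ?_
    · ext i j
      fin_cases i <;> fin_cases j <;> simp
    rw [star_dotProduct_mulVec_fin_two, Complex.zero_le_real]
    have hre : -(‖z‖ * ‖v 0‖ * ‖v 1‖) ≤ (z * star (v 0) * v 1).re := by
      have := Complex.abs_re_le_norm (z * star (v 0) * v 1)
      rw [norm_mul, norm_mul, norm_star] at this
      linarith [neg_abs_le (z * star (v 0) * v 1).re]
    have := two_mul_mul_le_of_sq_le ha hb (w := ‖z‖) (by rwa [← Complex.normSq_eq_norm_sq])
      ‖v 0‖ ‖v 1‖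
    linarith

end Matrix

lemma phiDelta_fin_two (A : Matrix (Fin 2) (Fin 2) ℝ) (s t : ℝ) (z : ℂ) :
    PhiDelta A !![(s : ℂ), z; star z, (t : ℂ)] =
      !![((A 0 0 * s + A 0 1 * t : ℝ) : ℂ), -z;
        star (-z), ((A 1 0 * s + A 1 1 * t : ℝ) : ℂ)] := by
  ext i j
  fin_cases i <;> fin_cases j <;>
    simp [PhiDelta, DeltaMap, Fin.sum_univ_two] <;> ring

theorem isPosMap_phiDelta_fin_two_iff {A : Matrix (Fin 2) (Fin 2) ℝ} (hA : ∀ i j, 0 ≤ A i j) :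
    IsPosMap (PhiDelta A) ↔ ∀ s t : ℝ, 0 ≤ s → 0 ≤ t →
      s * t ≤ (A 0 0 * s + A 0 1 * t) * (A 1 0 * s + A 1 1 * t) := by
  constructor
  · intro h s t hs ht
    have hst : Complex.normSq (√(s * t) : ℂ) = s * t := by
      rw [Complex.normSq_ofReal, Real.mul_self_sqrt (mul_nonneg hs ht)]
    have hX := posSemidef_fin_two_iff.2 ⟨hs, ht, hst.le⟩
    have hΦX := h _ hX
    rw [phiDelta_fin_two, posSemidef_fin_two_iff, Complex.normSq_neg, hst] at hΦX
    exact hΦX.2.2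
  · intro h X hX
    have hXeq := hX.1.eq_fin_two
    rw [hXeq] at hX ⊢
    obtain ⟨hs, ht, hz⟩ := posSemidef_fin_two_iff.1 hX
    rw [phiDelta_fin_two, posSemidef_fin_two_iff, Complex.normSq_neg]
    exact ⟨add_nonneg (mul_nonneg (hA 0 0) hs) (mul_nonneg (hA 0 1) ht),
      add_nonneg (mul_nonneg (hA 1 0) hs) (mul_nonneg (hA 1 1) ht), hz.trans (h _ _ hs ht)⟩

/-- For `n = 2`, the map `Φ_A(X) = Δ_A(X) - X` is positive iff
`√(a₁₁a₂₂) + √(a₁₂a₂₁) ≥ 1`. -/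
theorem phiDelta_two_pos_iff (A : Matrix (Fin 2) (Fin 2) ℝ) (hA : ∀ i j, 0 ≤ A i j) :
    IsPosMap (PhiDelta A) ↔
      1 ≤ Real.sqrt (A 0 0 * A 1 1) + Real.sqrt (A 0 1 * A 1 0) :=
  (isPosMap_phiDelta_fin_two_iff hA).trans
    (one_le_sqrt_add_sqrt_iff (hA 0 0) (hA 0 1) (hA 1 0) (hA 1 1)).symm
end
end

section
/- Let a_1, a_2, a_3 ≥ 1 and b, c > 0, and let A be the 3×3 matrix with rows (a_1,b,c), (c,a_2,b), (b,c,a_3). If the map Φ_A is positive, then (a_1a_2a_3)^{1/3} + b + c ≥ 2. -/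
/-!
Testing positivity of `Φ_A` on the rank-one projection onto `(√yᵢ)ᵢ`, for a vector `y ≥ 0`,
gives `(∑ yᵢ)² ≤ ⟪y, A y⟫ + ‖y‖²`. Writing `aᵢ = uᵢ²` and taking `y = (u₂u₃, u₁u₃, u₁u₂)`,
every term is a multiple of `u₁u₂u₃`, which leaves `(2 - b - c)(u₁ + u₂ + u₃) ≤ 3u₁u₂u₃`.
AM-GM, `(u₁ + u₂ + u₃)³ ≥ 27u₁u₂u₃`, turns this into
`2 - b - c ≤ (u₁u₂u₃)^(2/3) = (a₁a₂a₃)^(1/3)`.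
-/

open Matrix
open scoped ComplexOrder

noncomputable section

theorem phiMap_eq_diagonal_sub {n : ℕ} (A : Matrix (Fin n) (Fin n) ℝ)
    (X : Matrix (Fin n) (Fin n) ℂ) :
    PhiMap A X = diagonal (fun i => ∑ k, (A i k : ℂ) * X k k + X i i) - X := by
  ext i j
  by_cases h : i = j
  · subst h; simp [PhiMap]
  · simp [PhiMap, h]

theorem IsPosMap.sq_sum_le_of_phiMap {n : ℕ} {A : Matrix (Fin n) (Fin n) ℝ}
    (hA : IsPosMap (PhiMap A)) {y : Fin n → ℝ} (hy : 0 ≤ y) :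
    (∑ i, y i) ^ 2 ≤ y ⬝ᵥ (A *ᵥ y + y) := by
  set v : Fin n → ℂ := fun i => (√(y i) : ℝ)
  have hv : star v = v := by ext i; simp [v]
  have hvv (i : Fin n) : v i * v i = y i := by
    rw [← Complex.ofReal_mul, Real.mul_self_sqrt (hy i)]
  have hform : star v ⬝ᵥ (PhiMap A (vecMulVec v (star v)) *ᵥ v) =
      ((y ⬝ᵥ (A *ᵥ y + y) - (∑ i, y i) ^ 2 : ℝ) : ℂ) := by
    rw [hv, phiMap_eq_diagonal_sub, sub_mulVec, dotProduct_sub, vecMulVec_mulVec]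
    simp only [dotProduct, mulVec_diagonal, vecMulVec_apply, Pi.smul_apply, op_smul_eq_mul,
      mul_left_comm (v _), ← mul_assoc, hvv]
    simp only [dotProduct, mulVec, Pi.add_apply, sq]
    push_cast
    simp only [Finset.mul_sum, mul_comm]
  have h := (hA _ (posSemidef_vecMulVec_self_star v)).dotProduct_mulVec_nonneg v
  rw [hform, Complex.zero_le_real] at h
  linarith

theorem twenty_seven_mul_le_add_add_pow_three {u v w : ℝ} (hu : 0 ≤ u) (hv : 0 ≤ v) (hw : 0 ≤ w) :
    27 * (u * v * w) ≤ (u + v + w) ^ 3 := by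
  rw [← sub_nonneg, show (u + v + w) ^ 3 - 27 * (u * v * w) =
      (u + v + w) * ((u - v) ^ 2 + (v - w) ^ 2 + (w - u) ^ 2) / 2
        + 3 * (u * (v - w) ^ 2 + v * (w - u) ^ 2 + w * (u - v) ^ 2) by ring]
  positivity

theorem le_rpow_one_div_three_of_mul_add_add_le {u v w d : ℝ} (hu : 0 < u) (hv : 0 < v)
    (hw : 0 < w) (h : d * (u + v + w) ≤ 3 * (u * v * w)) :
    d ≤ ((u * v * w) ^ 2) ^ ((1 : ℝ) / 3) := by
  have hq : (((u * v * w) ^ 2) ^ ((1 : ℝ) / 3)) ^ 3 = (u * v * w) ^ 2 := by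
    rw [one_div]
    exact_mod_cast Real.rpow_inv_natCast_pow (by positivity : 0 ≤ (u * v * w) ^ 2) three_ne_zero
  rcases le_or_gt d 0 with hd | hd
  · exact hd.trans (by positivity)
  have hcube : d ^ 3 * (27 * (u * v * w)) ≤ (u * v * w) ^ 2 * (27 * (u * v * w)) := calc
    d ^ 3 * (27 * (u * v * w)) ≤ d ^ 3 * (u + v + w) ^ 3 :=
      mul_le_mul_of_nonneg_left (twenty_seven_mul_le_add_add_pow_three hu.le hv.le hw.le)
        (by positivity)
    _ = (d * (u + v + w)) ^ 3 := by ring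
    _ ≤ (3 * (u * v * w)) ^ 3 := pow_le_pow_left₀ (by positivity) h 3
    _ = (u * v * w) ^ 2 * (27 * (u * v * w)) := by ring
  rw [← pow_le_pow_iff_left₀ hd.le (by positivity) three_ne_zero, hq]
  exact le_of_mul_le_mul_right hcube (by positivity)

theorem IsPosMap.sub_mul_add_add_le {u v w b c : ℝ} (hu : 0 < u) (hv : 0 < v) (hw : 0 < w)
    (hA : IsPosMap (PhiMap !![u ^ 2, b, c; c, v ^ 2, b; b, c, w ^ 2])) :
    (2 - (b + c)) * (u + v + w) ≤ 3 * (u * v * w) := by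
  have hy : 0 ≤ ![v * w, u * w, u * v] := fun i => by fin_cases i <;> simp <;> positivity
  have h := hA.sq_sum_le_of_phiMap hy
  simp only [Fin.sum_univ_three, Fin.isValue, cons_val_zero, cons_val_one, cons_val, dotProduct,
    mulVec_cons, mulVec_empty, add_zero, Pi.add_apply, Pi.smul_apply, Function.comp_apply,
    smul_eq_mul, head_cons, tail_cons] at h
  refine le_of_mul_le_mul_left ?_ (by positivity : 0 < u * v * w)
  linear_combination h

theorem phiMap_pos_implies_geom_mean_bc_general (a₁ a₂ a₃ b c : ℝ)
    (ha₁ : 1 ≤ a₁) (ha₂ : 1 ≤ a₂) (ha₃ : 1 ≤ a₃)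
    (hpos : IsPosMap (PhiMap !![a₁, b, c; c, a₂, b; b, c, a₃])) :
    2 ≤ (a₁ * a₂ * a₃) ^ ((1 : ℝ) / 3) + b + c := by
  obtain ⟨u, hu, rfl⟩ : ∃ u, 0 < u ∧ u ^ 2 = a₁ := ⟨√a₁, by positivity, Real.sq_sqrt (by linarith)⟩
  obtain ⟨v, hv, rfl⟩ : ∃ v, 0 < v ∧ v ^ 2 = a₂ := ⟨√a₂, by positivity, Real.sq_sqrt (by linarith)⟩
  obtain ⟨w, hw, rfl⟩ : ∃ w, 0 < w ∧ w ^ 2 = a₃ := ⟨√a₃, by positivity, Real.sq_sqrt (by linarith)⟩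
  have h := le_rpow_one_div_three_of_mul_add_add_le hu hv hw (hpos.sub_mul_add_add_le hu hv hw)
  rw [mul_pow, mul_pow] at h
  linarith

/-- For `a₁, a₂, a₃ ≥ 1`, `b, c > 0` and `A` with rows `(a₁,b,c)`,
`(c,a₂,b)`, `(b,c,a₃)`: if `Φ_A` is positive then `(a₁a₂a₃)^{1/3} + b + c ≥ 2`. -/
theorem phiMap_pos_implies_geom_mean_bc (a₁ a₂ a₃ b c : ℝ)
    (ha₁ : 1 ≤ a₁) (ha₂ : 1 ≤ a₂) (ha₃ : 1 ≤ a₃) (hb : 0 < b) (hc : 0 < c)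
    (hpos : IsPosMap (PhiMap !![a₁, b, c; c, a₂, b; b, c, a₃])) :
    2 ≤ (a₁ * a₂ * a₃) ^ ((1 : ℝ) / 3) + b + c :=
  phiMap_pos_implies_geom_mean_bc_general a₁ a₂ a₃ b c ha₁ ha₂ ha₃ hpos
end
end
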